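/- arXiv:1503.04213 — 6 statements merged into one kernel-verified Lean document; each statement's English description precedes it below -/
import Mathlib

section
/- For quantum states ρ₁, ρ₂ on ℂ^d and α ∈ [0,1], Tr₂( U_α (ρ₁ ⊗ ρ₂) U_α† ) = α ρ₁ + (1−α) ρ₂ − √(α(1−α)) · i [ρ₁, ρ₂], where U_α = √α·I + i√(1−α)·S. -/
open Matrix Kronecker
open scoped ComplexOrder

/-- The swap operator `S` on `ℂ^d ⊗ ℂ^d`, defined by `S|i,j⟩ = |j,i⟩`. -/
def swapOp (d : ℕ) : Matrix (Fin d × Fin d) (Fin d × Fin d) ℂ :=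
  fun p q => if p.1 = q.2 ∧ p.2 = q.1 then 1 else 0

/-- Partial trace over the second tensor factor. -/
noncomputable def trace2 {d : ℕ} (M : Matrix (Fin d × Fin d) (Fin d × Fin d) ℂ) :
    Matrix (Fin d) (Fin d) ℂ :=
  fun i j => ∑ k : Fin d, M (i, k) (j, k)

lemma swap_mul_apply {d : ℕ} (M : Matrix (Fin d × Fin d) (Fin d × Fin d) ℂ)
    (p q : Fin d × Fin d) : (swapOp d * M) p q = M (p.2, p.1) q := by
  rw [Matrix.mul_apply, Fintype.sum_prod_type]
  simp [swapOp, ite_and, Finset.sum_ite_eq, Finset.sum_ite_eq', eq_comm]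

lemma mul_swap_apply {d : ℕ} (M : Matrix (Fin d × Fin d) (Fin d × Fin d) ℂ)
    (p q : Fin d × Fin d) : (M * swapOp d) p q = M p (q.2, q.1) := by
  rw [Matrix.mul_apply, Fintype.sum_prod_type]
  simp [swapOp, ite_and, Finset.sum_ite_eq, Finset.sum_ite_eq', eq_comm]

lemma swap_conjTranspose {d : ℕ} : (swapOp d)ᴴ = swapOp d := by
  ext p q
  simp [conjTranspose_apply, swapOp, apply_ite (starRingEnd ℂ), and_comm, eq_comm]

lemma trace2_add {d : ℕ} (M N : Matrix (Fin d × Fin d) (Fin d × Fin d) ℂ) :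
    trace2 (M + N) = trace2 M + trace2 N := by
  ext i j; simp [trace2, Finset.sum_add_distrib]

lemma trace2_sub {d : ℕ} (M N : Matrix (Fin d × Fin d) (Fin d × Fin d) ℂ) :
    trace2 (M - N) = trace2 M - trace2 N := by
  ext i j; simp [trace2, Finset.sum_sub_distrib]

lemma trace2_smul {d : ℕ} (c : ℂ) (M : Matrix (Fin d × Fin d) (Fin d × Fin d) ℂ) :
    trace2 (c • M) = c • trace2 M := by
  ext i j; simp [trace2, Finset.mul_sum]

lemma trace2_kron {d : ℕ} (A B : Matrix (Fin d) (Fin d) ℂ) :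
    trace2 (A ⊗ₖ B) = B.trace • A := by
  ext i j
  simp only [trace2, Matrix.kroneckerMap_apply, Matrix.smul_apply, smul_eq_mul,
    Matrix.trace, Matrix.diag]
  rw [← Finset.mul_sum, mul_comm]

lemma trace2_swap_kron {d : ℕ} (A B : Matrix (Fin d) (Fin d) ℂ) :
    trace2 (swapOp d * (A ⊗ₖ B)) = B * A := by
  ext i j
  have h : ∀ k, (swapOp d * (A ⊗ₖ B)) (i,k) (j,k) = B i k * A k j := fun k => by
    rw [swap_mul_apply]; simp [mul_comm]
  simp only [trace2, h, Matrix.mul_apply]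

lemma trace2_kron_swap {d : ℕ} (A B : Matrix (Fin d) (Fin d) ℂ) :
    trace2 ((A ⊗ₖ B) * swapOp d) = A * B := by
  ext i j
  have h : ∀ k, ((A ⊗ₖ B) * swapOp d) (i,k) (j,k) = A i k * B k j := fun k => by
    rw [mul_swap_apply]; simp
  simp only [trace2, h, Matrix.mul_apply]

lemma trace2_swap_kron_swap {d : ℕ} (A B : Matrix (Fin d) (Fin d) ℂ) :
    trace2 (swapOp d * (A ⊗ₖ B) * swapOp d) = A.trace • B := by
  ext i j
  simp only [trace2, mul_swap_apply, swap_mul_apply, Matrix.kroneckerMap_apply,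
    Matrix.smul_apply, smul_eq_mul, Matrix.trace, Matrix.diag]
  rw [← Finset.sum_mul]

theorem stmt_4 (d : ℕ) (α : ℝ) (hα : α ∈ Set.Icc (0:ℝ) 1)
    (ρ₁ ρ₂ : Matrix (Fin d) (Fin d) ℂ)
    (hρ₁ : ρ₁.PosSemidef) (hρ₁tr : ρ₁.trace = 1)
    (hρ₂ : ρ₂.PosSemidef) (hρ₂tr : ρ₂.trace = 1)
    (U : Matrix (Fin d × Fin d) (Fin d × Fin d) ℂ)
    (hU : U = (Real.sqrt α : ℂ) • (1 : Matrix (Fin d × Fin d) (Fin d × Fin d) ℂ)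
        + ((Real.sqrt (1 - α) : ℂ) * Complex.I) • swapOp d) :
    trace2 (U * (ρ₁ ⊗ₖ ρ₂) * Uᴴ)
      = (α : ℂ) • ρ₁ + ((1 - α : ℝ) : ℂ) • ρ₂
        - ((Real.sqrt (α * (1 - α)) : ℂ) * Complex.I) • (ρ₁ * ρ₂ - ρ₂ * ρ₁) := by
  obtain ⟨h0, h1⟩ := hα
  have ha : (Real.sqrt α : ℂ) * (Real.sqrt α : ℂ) = (α : ℂ) := by
    norm_cast; exact Real.mul_self_sqrt h0
  have hb : (Real.sqrt (1-α) : ℂ) * (Real.sqrt (1-α) : ℂ) = ((1-α : ℝ) : ℂ) := by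
    norm_cast; exact Real.mul_self_sqrt (by linarith)
  have hc : ((Real.sqrt (1-α) : ℂ) * Complex.I) * ((Real.sqrt (1-α) : ℂ) * Complex.I)
      = -(((1-α : ℝ)) : ℂ) := by
    rw [mul_mul_mul_comm, hb, Complex.I_mul_I]; ring
  have hac : (Real.sqrt α : ℂ) * ((Real.sqrt (1-α) : ℂ) * Complex.I)
      = (Real.sqrt (α*(1-α)) : ℂ) * Complex.I := by
    rw [← mul_assoc]
    congr 1
    norm_cast
    exact (Real.sqrt_mul h0 _).symm
  have hUH : Uᴴ = (Real.sqrt α : ℂ) • (1 : Matrix (Fin d × Fin d) (Fin d × Fin d) ℂ)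
      - ((Real.sqrt (1 - α) : ℂ) * Complex.I) • swapOp d := by
    rw [hU]
    simp [conjTranspose_smul, swap_conjTranspose, Complex.conj_ofReal, Complex.conj_I,
      sub_eq_add_neg, mul_comm]
  rw [hUH, hU]
  simp only [Matrix.add_mul, Matrix.mul_sub, Matrix.smul_mul, Matrix.mul_smul,
    Matrix.one_mul, Matrix.mul_one, smul_smul,
    trace2_add, trace2_sub, trace2_smul, trace2_kron, trace2_swap_kron,
    trace2_kron_swap, trace2_swap_kron_swap]
  rw [hρ₁tr, hρ₂tr]
  simp only [mul_one, smul_add, smul_sub, smul_smul]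
  have hca : ((Real.sqrt (1-α) : ℂ) * Complex.I) * (Real.sqrt α : ℂ)
      = (Real.sqrt (α*(1-α)) : ℂ) * Complex.I := by rw [← hac]; ring
  rw [ha, hc, hac, hca]
  module
end

section
/- For any states ρ, σ on ℂ^d and α ∈ [0,1], the matrix ρ ⊞_α σ := α ρ + (1−α) σ − √(α(1−α)) i [ρ,σ] is a valid density matrix (positive semidefinite with trace 1). -/
open scoped ComplexOrder

section Aux

open Matrix

lemma eig_sum_one {d : ℕ} {ρ : Matrix (Fin d) (Fin d) ℂ} (hρ : ρ.PosSemidef)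
    (hρtr : ρ.trace = 1) : ∑ i, hρ.1.eigenvalues i = 1 := by
  have h := hρ.1.spectral_theorem
  have h2 : ρ.trace = (Matrix.diagonal (RCLike.ofReal ∘ hρ.1.eigenvalues) :
      Matrix (Fin d) (Fin d) ℂ).trace := by
    conv_lhs => rw [h]
    rw [Unitary.conjStarAlgAut_apply, Matrix.trace_mul_cycle, Unitary.coe_star_mul_self hρ.1.eigenvectorUnitary,
      Matrix.one_mul]
  rw [hρtr, Matrix.trace_diagonal] at h2
  have h3 : ∑ i, ((hρ.1.eigenvalues i : ℝ) : ℂ) = 1 := by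
    simpa [Function.comp] using h2.symm
  exact_mod_cast h3

lemma sub_sq_psd {d : ℕ} {ρ : Matrix (Fin d) (Fin d) ℂ} (hρ : ρ.PosSemidef)
    (hρtr : ρ.trace = 1) : (ρ - ρ * ρ).PosSemidef := by
  have hle : ∀ i, hρ.1.eigenvalues i ≤ 1 := by
    intro i
    rw [← eig_sum_one hρ hρtr]
    exact Finset.single_le_sum (fun j _ => hρ.eigenvalues_nonneg j) (Finset.mem_univ i)
  set U : Matrix (Fin d) (Fin d) ℂ := (hρ.1.eigenvectorUnitary : Matrix (Fin d) (Fin d) ℂ)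
  set D : Matrix (Fin d) (Fin d) ℂ := Matrix.diagonal (RCLike.ofReal ∘ hρ.1.eigenvalues)
  have hU : star U * U = 1 := Unitary.coe_star_mul_self hρ.1.eigenvectorUnitary
  have h := hρ.1.spectral_theorem
  have key : ρ - ρ * ρ = U * (D - D * D) * Uᴴ := by
    rw [← Matrix.star_eq_conjTranspose]
    calc ρ - ρ * ρ = U * D * star U - (U * D * star U) * (U * D * star U) := by rw [Unitary.conjStarAlgAut_apply] at h; rw [← h]
    _ = U * (D - D * D) * star U := by
        rw [Matrix.mul_sub, Matrix.sub_mul]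
        congr 1
        rw [show (U * D * star U) * (U * D * star U) = U * D * (star U * U) * D * star U by
          noncomm_ring]
        rw [hU, Matrix.mul_one]
        noncomm_ring
  rw [key]
  apply Matrix.PosSemidef.mul_mul_conjTranspose_same
  have hD : D - D * D = Matrix.diagonal
      (fun i => (RCLike.ofReal (hρ.1.eigenvalues i - hρ.1.eigenvalues i ^ 2) : ℂ)) := by
    simp only [D, Matrix.diagonal_mul_diagonal, Matrix.diagonal_sub]
    ext i j
    by_cases hij : i = j
    · subst hij
      simp only [Matrix.diagonal_apply_eq, Function.comp_apply]
      push_cast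
      ring
    · simp [Matrix.diagonal_apply_ne _ hij]
  rw [hD]
  refine Matrix.posSemidef_diagonal_iff.mpr fun i => ?_
  exact RCLike.ofReal_nonneg.mpr (by nlinarith [hρ.eigenvalues_nonneg i, hle i])

lemma dot_shift {d : ℕ} (ρ σ : Matrix (Fin d) (Fin d) ℂ) (hρ : ρ.IsHermitian)
    (x : Fin d → ℂ) :
    star x ⬝ᵥ ((ρ * σ) *ᵥ x) = star (ρ *ᵥ x) ⬝ᵥ (σ *ᵥ x) := by
  rw [← Matrix.mulVec_mulVec, Matrix.dotProduct_mulVec, Matrix.star_mulVec, hρ.eq]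

lemma cs_dot {d : ℕ} (u v : Fin d → ℂ) :
    ‖star u ⬝ᵥ v‖
      ≤ Real.sqrt (star u ⬝ᵥ u).re * Real.sqrt (star v ⬝ᵥ v).re := by
  have h := norm_inner_le_norm (𝕜 := ℂ)
    ((WithLp.equiv 2 (Fin d → ℂ)).symm u) ((WithLp.equiv 2 (Fin d → ℂ)).symm v)
  have hinner : ∀ w w' : Fin d → ℂ, inner ℂ ((WithLp.equiv 2 (Fin d → ℂ)).symm w)
      ((WithLp.equiv 2 (Fin d → ℂ)).symm w') = star w ⬝ᵥ w' := fun w w' => by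
    rw [dotProduct_comm]; exact EuclideanSpace.inner_toLp_toLp w w'
  rw [hinner] at h
  have hu : ‖(WithLp.equiv 2 (Fin d → ℂ)).symm u‖ = Real.sqrt (star u ⬝ᵥ u).re := by
    rw [norm_eq_sqrt_re_inner (𝕜 := ℂ), hinner]
    rfl
  have hv : ‖(WithLp.equiv 2 (Fin d → ℂ)).symm v‖ = Real.sqrt (star v ⬝ᵥ v).re := by
    rw [norm_eq_sqrt_re_inner (𝕜 := ℂ), hinner]
    rfl
  rw [hu, hv] at h
  simpa using h

end Aux

open Matrix

/-- The partial swap addition rule `ρ ⊞_α σ`. -/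
noncomputable def boxplus {d : ℕ} (α : ℝ) (ρ σ : Matrix (Fin d) (Fin d) ℂ) :
    Matrix (Fin d) (Fin d) ℂ :=
  (α : ℂ) • ρ + ((1 - α : ℝ) : ℂ) • σ
    - ((Real.sqrt (α * (1 - α)) : ℂ) * Complex.I) • (ρ * σ - σ * ρ)

theorem stmt_5 (d : ℕ) (α : ℝ) (hα : α ∈ Set.Icc (0:ℝ) 1)
    (ρ σ : Matrix (Fin d) (Fin d) ℂ)
    (hρ : ρ.PosSemidef) (hρtr : ρ.trace = 1)
    (hσ : σ.PosSemidef) (hσtr : σ.trace = 1) :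
    (boxplus α ρ σ).PosSemidef ∧ (boxplus α ρ σ).trace = 1 := by
  refine ⟨Matrix.PosSemidef.of_dotProduct_mulVec_nonneg ?_ ?_, ?_⟩
  · show (boxplus α ρ σ)ᴴ = boxplus α ρ σ
    simp only [boxplus, Matrix.conjTranspose_sub, Matrix.conjTranspose_add,
      Matrix.conjTranspose_smul, Matrix.conjTranspose_mul, hρ.1.eq, hσ.1.eq,
      star_mul', Complex.star_def, Complex.conj_I, Complex.conj_ofReal]
    module
  · intro x
    obtain ⟨hα0, hα1⟩ := hα
    set c := Real.sqrt (α * (1 - α)) with hc_def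
    have hc0 : 0 ≤ c := Real.sqrt_nonneg _
    obtain ⟨hAre, hAim⟩ := Complex.nonneg_iff.mp (hρ.dotProduct_mulVec_nonneg x)
    obtain ⟨hBre, hBim⟩ := Complex.nonneg_iff.mp (hσ.dotProduct_mulVec_nonneg x)
    obtain ⟨a, ha⟩ : ∃ a : ℝ, star x ⬝ᵥ (ρ *ᵥ x) = (a : ℂ) :=
      ⟨_, Complex.ext rfl hAim.symm⟩
    obtain ⟨b, hb⟩ : ∃ b : ℝ, star x ⬝ᵥ (σ *ᵥ x) = (b : ℂ) :=
      ⟨_, Complex.ext rfl hBim.symm⟩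
    have ha0 : 0 ≤ a := by
      have := hAre; rw [ha] at this; simpa using this
    have hb0 : 0 ≤ b := by
      have := hBre; rw [hb] at this; simpa using this
    set z := star (ρ *ᵥ x) ⬝ᵥ (σ *ᵥ x) with hz_def
    have hz1 : star x ⬝ᵥ ((ρ * σ) *ᵥ x) = z := dot_shift ρ σ hρ.1 x
    have hz2 : star x ⬝ᵥ ((σ * ρ) *ᵥ x) = (starRingEnd ℂ) z := by
      rw [dot_shift σ ρ hσ.1 x, hz_def, Matrix.star_dotProduct]
      rfl
    have hII : (↑c * Complex.I) * (((2 * z.im : ℝ) : ℂ) * Complex.I)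
        = ((-(2 * c * z.im) : ℝ) : ℂ) := by
      rw [mul_mul_mul_comm, Complex.I_mul_I]
      push_cast
      ring
    have hQ : star x ⬝ᵥ (boxplus α ρ σ *ᵥ x)
        = ((α * a + (1 - α) * b + 2 * c * z.im : ℝ) : ℂ) := by
      simp only [boxplus, Matrix.sub_mulVec, Matrix.add_mulVec, Matrix.smul_mulVec,
        dotProduct_sub, dotProduct_add, dotProduct_smul, smul_eq_mul,
        hz1, hz2, ha, hb]
      rw [mul_sub (((c : ℂ)) * Complex.I), sub_eq_add_neg, ← mul_sub, Complex.sub_conj, hII]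
      push_cast
      ring
    rw [hQ, Complex.zero_le_real]
    set u := (star (ρ *ᵥ x) ⬝ᵥ (ρ *ᵥ x)).re with hu_def
    set v := (star (σ *ᵥ x) ⬝ᵥ (σ *ᵥ x)).re with hv_def
    have hu0 : 0 ≤ u := by
      rw [hu_def]
      simpa using (Complex.nonneg_iff.mp ((Matrix.PosSemidef.one (n := Fin d) (R := ℂ)).dotProduct_mulVec_nonneg (ρ *ᵥ x))).1
    have hv0 : 0 ≤ v := by
      rw [hv_def]
      simpa using (Complex.nonneg_iff.mp ((Matrix.PosSemidef.one (n := Fin d) (R := ℂ)).dotProduct_mulVec_nonneg (σ *ᵥ x))).1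
    have hule : u ≤ a := by
      have h := Complex.nonneg_iff.mp ((sub_sq_psd hρ hρtr).dotProduct_mulVec_nonneg x) |>.1
      rw [Matrix.sub_mulVec, dotProduct_sub, Complex.sub_re, dot_shift ρ ρ hρ.1 x,
        ha] at h
      simp only [Complex.ofReal_re] at h
      linarith
    have hvle : v ≤ b := by
      have h := Complex.nonneg_iff.mp ((sub_sq_psd hσ hσtr).dotProduct_mulVec_nonneg x) |>.1
      rw [Matrix.sub_mulVec, dotProduct_sub, Complex.sub_re, dot_shift σ σ hσ.1 x,
        hb] at h
      simp only [Complex.ofReal_re] at h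
      linarith
    have hCS : ‖z‖ ≤ Real.sqrt u * Real.sqrt v := cs_dot (ρ *ᵥ x) (σ *ᵥ x)
    have him : |z.im| ≤ Real.sqrt u * Real.sqrt v := (Complex.abs_im_le_norm z).trans hCS
    have key : 2 * c * |z.im| ≤ α * a + (1 - α) * b := by
      have h1 : 2 * c * |z.im| ≤ 2 * c * (Real.sqrt u * Real.sqrt v) :=
        mul_le_mul_of_nonneg_left him (by linarith)
      have hc : c = Real.sqrt α * Real.sqrt (1 - α) := by
        rw [hc_def, Real.sqrt_mul hα0]
      have h2 : 2 * (Real.sqrt α * Real.sqrt u) * (Real.sqrt (1 - α) * Real.sqrt v)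
          ≤ (Real.sqrt α * Real.sqrt u) ^ 2 + (Real.sqrt (1 - α) * Real.sqrt v) ^ 2 :=
        two_mul_le_add_sq _ _
      have e1 : (Real.sqrt α * Real.sqrt u) ^ 2 = α * u := by
        rw [mul_pow, Real.sq_sqrt hα0, Real.sq_sqrt hu0]
      have e2 : (Real.sqrt (1 - α) * Real.sqrt v) ^ 2 = (1 - α) * v := by
        rw [mul_pow, Real.sq_sqrt (by linarith), Real.sq_sqrt hv0]
      have h3 : α * u ≤ α * a := mul_le_mul_of_nonneg_left hule hα0
      have h4 : (1 - α) * v ≤ (1 - α) * b := mul_le_mul_of_nonneg_left hvle (by linarith)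
      calc 2 * c * |z.im| ≤ 2 * c * (Real.sqrt u * Real.sqrt v) := h1
        _ = 2 * (Real.sqrt α * Real.sqrt u) * (Real.sqrt (1 - α) * Real.sqrt v) := by
            rw [hc]; ring
        _ ≤ α * u + (1 - α) * v := by rw [← e1, ← e2]; exact h2
        _ ≤ α * a + (1 - α) * b := by linarith
    have hneg := neg_abs_le z.im
    nlinarith [key, abs_nonneg z.im]
  · simp only [boxplus, Matrix.trace_sub, Matrix.trace_add, Matrix.trace_smul, hρtr, hσtr,
      smul_eq_mul, mul_one, Matrix.trace_mul_comm ρ σ]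
    push_cast
    ring
end

section
/- The function g(x) := (x+1)log(x+1) − x log x satisfies 1 + log(x + 1/e) ≤ g(x) ≤ 1 + log(x + 1/2) for all x > 0. -/
open Real Set

lemma log_ge_pade {t : ℝ} (ht : 0 ≤ t) : 2*t/(2+t) ≤ Real.log (1+t) := by
  set f : ℝ → ℝ := fun u => Real.log (1+u) - 2*u/(2+u) with hf
  have hd : ∀ u : ℝ, 0 ≤ u → HasDerivAt f (1/(1+u) - 4/(2+u)^2) u := by
    intro u hu
    have h1 : (0:ℝ) < 1 + u := by linarith
    have h2 : (0:ℝ) < 2 + u := by linarith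
    have hlog : HasDerivAt (fun v : ℝ => Real.log (1+v)) (1/(1+u)) u := by
      have := (Real.hasDerivAt_log h1.ne').comp u ((hasDerivAt_id u).const_add 1)
      simpa [one_div, Function.comp_def] using this
    have hq : HasDerivAt (fun v : ℝ => 2*v/(2+v)) (4/(2+u)^2) u := by
      have hnum : HasDerivAt (fun v : ℝ => 2*v) 2 u := by
        simpa using (hasDerivAt_id u).const_mul 2
      have hden : HasDerivAt (fun v : ℝ => 2+v) 1 u := (hasDerivAt_id u).const_add 2
      have := hnum.div hden h2.ne'
      refine (this : HasDerivAt (fun v : ℝ => 2*v/(2+v)) _ u).congr_deriv ?_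
      ring
    exact hlog.sub hq
  have hmono : MonotoneOn f (Ici 0) := by
    apply monotoneOn_of_deriv_nonneg (convex_Ici 0)
    · intro u hu
      exact (hd u hu).continuousAt.continuousWithinAt
    · intro u hu
      rw [interior_Ici] at hu
      exact (hd u (le_of_lt hu)).differentiableAt.differentiableWithinAt
    · intro u hu
      rw [interior_Ici] at hu
      rw [(hd u (le_of_lt hu)).deriv]
      have h1 : (0:ℝ) < 1 + u := by linarith [mem_Ioi.mp hu]
      have h2 : (0:ℝ) < 2 + u := by linarith [mem_Ioi.mp hu]
      rw [sub_nonneg, div_le_div_iff₀ (by positivity) h1]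
      nlinarith [sq_nonneg u]
  have h0 : f 0 ≤ f t := hmono (self_mem_Ici) ht ht
  simp [hf] at h0
  linarith

lemma log_ratio_ge {a b : ℝ} (ha : 0 < a) (hab : a ≤ b) :
    2*(b-a)/(a+b) ≤ Real.log b - Real.log a := by
  have hb : 0 < b := lt_of_lt_of_le ha hab
  have h := log_ge_pade (t := (b-a)/a) (div_nonneg (by linarith) ha.le)
  have h1 : 1 + (b-a)/a = b/a := by field_simp; ring
  have hab0 : a + b ≠ 0 := by positivity
  have hden : 2 + (b-a)/a = (a+b)/a := by field_simp; ring
  have h2 : 2*((b-a)/a)/(2+(b-a)/a) = 2*(b-a)/(a+b) := by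
    rw [hden]
    field_simp
  rw [h1, h2, Real.log_div hb.ne' ha.ne'] at h
  exact h

lemma log_le_cubic {t : ℝ} (ht : 0 ≤ t) : Real.log (1+t) ≤ t - t^2/2 + t^3/3 := by
  set f : ℝ → ℝ := fun u => u - u^2/2 + u^3/3 - Real.log (1+u) with hf
  have hd : ∀ u : ℝ, 0 ≤ u → HasDerivAt f (1 - u + u^2 - 1/(1+u)) u := by
    intro u hu
    have h1 : (0:ℝ) < 1 + u := by linarith
    have hlog : HasDerivAt (fun v : ℝ => Real.log (1+v)) (1/(1+u)) u := by
      have := (Real.hasDerivAt_log h1.ne').comp u ((hasDerivAt_id u).const_add 1)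
      simpa [one_div, Function.comp_def] using this
    have hpoly : HasDerivAt (fun v : ℝ => v - v^2/2 + v^3/3) (1 - u + u^2) u := by
      have h3 : HasDerivAt (fun v : ℝ => v) 1 u := hasDerivAt_id u
      have h4 : HasDerivAt (fun v : ℝ => v^2) (2*u) u := by
        simpa using hasDerivAt_pow 2 u
      have h5 : HasDerivAt (fun v : ℝ => v^3) (3*u^2) u := by
        simpa using hasDerivAt_pow 3 u
      have := (h3.sub (h4.div_const 2)).add (h5.div_const 3)
      refine (this : HasDerivAt (fun v : ℝ => v - v^2/2 + v^3/3) _ u).congr_deriv ?_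
      ring
    exact hpoly.sub hlog
  have hmono : MonotoneOn f (Ici 0) := by
    apply monotoneOn_of_deriv_nonneg (convex_Ici 0)
    · intro u hu
      exact (hd u hu).continuousAt.continuousWithinAt
    · intro u hu
      rw [interior_Ici] at hu
      exact (hd u (le_of_lt hu)).differentiableAt.differentiableWithinAt
    · intro u hu
      rw [interior_Ici] at hu
      rw [(hd u (le_of_lt hu)).deriv]
      have h1 : (0:ℝ) < 1 + u := by linarith [mem_Ioi.mp hu]
      have hu0 : (0:ℝ) < u := mem_Ioi.mp hu
      rw [sub_nonneg, div_le_iff₀ h1]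
      nlinarith
  have h0 : f 0 ≤ f t := hmono (self_mem_Ici) ht ht
  simp [hf] at h0
  linarith

-- numeric facts
lemma log5_ge : (1.25:ℝ) ≤ Real.log 5 := by
  rw [Real.le_log_iff_exp_le (by norm_num : (0:ℝ) < 5)]
  have h4 : Real.exp (1.25) ^ 4 = Real.exp 5 := by
    rw [← Real.exp_nat_mul]; norm_num
  have h5 : Real.exp 5 = Real.exp 1 ^ 5 := by
    rw [← Real.exp_nat_mul]; norm_num
  have hlt : Real.exp 1 ^ 5 < 2.7182818286 ^ 5 :=
    pow_lt_pow_left₀ Real.exp_one_lt_d9 (Real.exp_pos 1).le (by norm_num)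
  have : Real.exp (1.25) ^ 4 < 5 ^ 4 := by
    rw [h4, h5]; nlinarith
  exact le_of_lt (lt_of_pow_lt_pow_left₀ 4 (by norm_num) this)

theorem stmt_9 (x : ℝ) (hx : 0 < x) :
    1 + Real.log (x + 1 / Real.exp 1)
      ≤ (x + 1) * Real.log (x + 1) - x * Real.log x
    ∧ (x + 1) * Real.log (x + 1) - x * Real.log x
      ≤ 1 + Real.log (x + 1 / 2) := by
  have hE1 : Real.exp 1 < 2.7182818286 := Real.exp_one_lt_d9
  have hE2 : 2.7182818283 < Real.exp 1 := Real.exp_one_gt_d9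
  have hEpos : 0 < Real.exp 1 := Real.exp_pos 1
  have hxe : 0 < x + 1/Real.exp 1 := by positivity
  constructor
  · -- lower bound
    rcases le_or_gt x (1/5) with hx5 | hx5
    · -- small x
      have hrhseq : 1 + Real.log (x + 1/Real.exp 1)
          = Real.log (1 + Real.exp 1 * x) := by
        rw [show (1:ℝ) + Real.log (x + 1/Real.exp 1)
            = Real.log (Real.exp 1) + Real.log (x + 1/Real.exp 1) by rw [Real.log_exp],
          ← Real.log_mul hEpos.ne' hxe.ne']
        congr 1
        field_simp
        ring
      have hcub := log_le_cubic (t := Real.exp 1 * x) (by positivity)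
      have ha : x ≤ (x+1) * Real.log (x+1) := by
        have := log_ge_pade hx.le
        have h2x : (0:ℝ) < 2 + x := by linarith
        have : (x+1) * (2*x/(2+x)) ≤ (x+1) * Real.log (1+x) :=
          mul_le_mul_of_nonneg_left this (by linarith)
        rw [show (1:ℝ)+x = x+1 by ring, mul_div_assoc'] at this
        refine le_trans ?_ this
        rw [le_div_iff₀ h2x]
        nlinarith
      have hb : x * Real.log x ≤ x * (5*x - 1 - Real.log 5) := by
        apply mul_le_mul_of_nonneg_left _ hx.le
        have h5x : Real.log (5*x) ≤ 5*x - 1 := Real.log_le_sub_one_of_pos (by positivity)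
        rw [Real.log_mul (by norm_num) hx.ne'] at h5x
        linarith
      have hlog5 := log5_ge
      rw [hrhseq]
      have hE2sq : (7.389056:ℝ) < Real.exp 1 ^ 2 := by nlinarith
      have hE3 : Real.exp 1 ^ 3 < 20.0855370 := by nlinarith
      have key : Real.exp 1 - Real.exp 1^2 * x / 2 + Real.exp 1^3 * x^2 / 3
          ≤ 2 + Real.log 5 - 5*x := by nlinarith [sq_nonneg x, mul_pos hx hx]
      have key2 : Real.exp 1 * x - (Real.exp 1 * x)^2/2 + (Real.exp 1 * x)^3/3
          ≤ x * (2 + Real.log 5 - 5*x) := by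
        have := mul_le_mul_of_nonneg_left key hx.le
        calc Real.exp 1 * x - (Real.exp 1 * x)^2/2 + (Real.exp 1 * x)^3/3
            = x * (Real.exp 1 - Real.exp 1^2 * x / 2 + Real.exp 1^3 * x^2 / 3) := by ring
          _ ≤ x * (2 + Real.log 5 - 5*x) := this
      linarith
    · -- x ≥ 1/5
      have h1 : 2*((x+1)-x)/(x+(x+1)) ≤ Real.log (x+1) - Real.log x :=
        log_ratio_ge hx (by linarith)
      have h1' : 2/(2*x+1) ≤ Real.log (x+1) - Real.log x := by
        rw [show 2*((x+1)-x)/(x+(x+1)) = 2/(2*x+1) by ring_nf] at h1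
        exact h1
      have h2 : 2*((x+1)-(x+1/Real.exp 1))/((x+1/Real.exp 1)+(x+1))
          ≤ Real.log (x+1) - Real.log (x+1/Real.exp 1) :=
        log_ratio_ge hxe (by
          have h1e : 1/Real.exp 1 ≤ 1 := by
            rw [div_le_one hEpos]; linarith
          linarith)
      have h2' : 2*(1-1/Real.exp 1)/(2*x+1+1/Real.exp 1)
          ≤ Real.log (x+1) - Real.log (x+1/Real.exp 1) := by
        rw [show 2*((x+1)-(x+1/Real.exp 1))/((x+1/Real.exp 1)+(x+1))
            = 2*(1-1/Real.exp 1)/(2*x+1+1/Real.exp 1) by ring_nf] at h2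
        exact h2
      have hi : 1/Real.exp 1 < 0.3678794413 := by
        rw [div_lt_iff₀ hEpos]
        nlinarith
      have hipos : 0 < 1/Real.exp 1 := by positivity
      have hA : (0:ℝ) < 2*x+1 := by linarith
      have hB : (0:ℝ) < 2*x+1+1/Real.exp 1 := by linarith
      have hfrac : 1 ≤ 2*x/(2*x+1) + 2*(1-1/Real.exp 1)/(2*x+1+1/Real.exp 1) := by
        rw [div_add_div _ _ hA.ne' hB.ne', le_div_iff₀ (mul_pos hA hB)]
        nlinarith [mul_nonneg (by linarith : (0:ℝ) ≤ x - 1/5)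
          (by linarith : (0:ℝ) ≤ 0.3678794413 - 1/Real.exp 1)]
      have hxlog : x * (2/(2*x+1)) ≤ x * (Real.log (x+1) - Real.log x) :=
        mul_le_mul_of_nonneg_left h1' hx.le
      have hexp : (x+1) * Real.log (x+1) - x * Real.log x
          = Real.log (x+1) + x * (Real.log (x+1) - Real.log x) := by ring
      have hxd : x * (2/(2*x+1)) = 2*x/(2*x+1) := by ring
      rw [hexp]
      rw [hxd] at hxlog
      linarith
  · -- upper bound
    have hm : (0:ℝ) < x + 1/2 := by linarith
    have h0 : (0:ℝ) ∉ Set.uIcc x (x+1) := by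
      rw [Set.uIcc_of_le (by linarith : x ≤ x+1)]
      rintro ⟨h, -⟩
      linarith
    have hint : ∫ t in x..(x+1), Real.log t
        = (x+1) * Real.log (x+1) - x * Real.log x - 1 := by
      rw [integral_log]; ring
    have hcont : ContinuousOn Real.log (Set.uIcc x (x+1)) := by
      apply Real.continuousOn_log.mono
      intro t ht
      simp only [Set.mem_compl_iff, Set.mem_singleton_iff]
      rintro rfl
      exact h0 ht
    have hi1 : IntervalIntegrable Real.log MeasureTheory.volume x (x+1) :=
      hcont.intervalIntegrable
    have hi2 : IntervalIntegrable (fun t => Real.log (x+1/2) - 1 + t/(x+1/2))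
        MeasureTheory.volume x (x+1) :=
      (continuous_const.add (continuous_id.div_const _)).intervalIntegrable _ _
    have hptwise : ∀ t ∈ Set.Icc x (x+1),
        Real.log t ≤ Real.log (x+1/2) - 1 + t/(x+1/2) := by
      intro t ht
      have htpos : 0 < t := lt_of_lt_of_le hx ht.1
      have h := Real.log_le_sub_one_of_pos (show (0:ℝ) < t/(x+1/2) by positivity)
      rw [Real.log_div htpos.ne' hm.ne'] at h
      linarith
    have hmono := intervalIntegral.integral_mono_on (by linarith : x ≤ x+1) hi1 hi2 hptwise
    have hval : (∫ t in x..(x+1), (Real.log (x+1/2) - 1 + t/(x+1/2)))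
        = Real.log (x+1/2) := by
      have hg : IntervalIntegrable (fun t : ℝ => t/(x+1/2)) MeasureTheory.volume x (x+1) := by
        apply Continuous.intervalIntegrable
        exact continuous_id'.div_const _
      have hadd := intervalIntegral.integral_add (μ := MeasureTheory.volume) (a := x) (b := x+1)
        (f := fun _ : ℝ => Real.log (x+1/2) - 1) (g := fun t : ℝ => t/(x+1/2))
        intervalIntegrable_const hg
      rw [hadd]
      rw [intervalIntegral.integral_const]
      have : (∫ t in x..(x+1), t/(x+1/2)) = (∫ t in x..(x+1), t) / (x+1/2) :=
        intervalIntegral.integral_div _ _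
      rw [this, integral_id]
      field_simp
      ring
    rw [hint, hval] at hmono
    linarith
end

section
/- For probability distributions q = (q₁,…,q_d), the maximum of Σ_i q_i (log q_i)² subject to the Shannon entropy H(q) = H₀ ∈ [0, log d] being fixed equals r·x(1−r·x)(log x − log(1−r·x))² + H₀², where r = d−1 and x ∈ [0, 1/d] is such that the distribution (x,…,x, 1−(d−1)x) has entropy H₀; moreover the maximum is attained by a distribution whose entries take at most two values, namely (x,…,x,y) with (d−1)x + y = 1 and 0 ≤ x < y. -/
open Real Finset

/-- The Shannon entropy `H(q) = -∑ i, q i * log (q i)` (terms with `q i = 0` vanish). -/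
noncomputable def shannonEntropy {d : ℕ} (q : Fin d → ℝ) : ℝ :=
  ∑ i, Real.negMulLog (q i)

/-- `L(q) = ∑ i, q i * (log (q i))²` (terms with `q i = 0` vanish since `log 0 = 0`). -/
noncomputable def surprisalSq {d : ℕ} (q : Fin d → ℝ) : ℝ :=
  ∑ i, q i * (Real.log (q i)) ^ 2

lemma aux_two_exp {δ : ℝ} (hδ : 0 ≤ δ) : 2 * Real.exp (-δ) ≤ δ ^ 2 - 2 * δ + 2 := by
  have key : MonotoneOn (fun t : ℝ => t ^ 2 - 2 * t + 2 - 2 * Real.exp (-t)) (Set.Ici 0) := by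
    apply monotoneOn_of_deriv_nonneg (convex_Ici 0)
    · fun_prop
    · intro t _
      exact (DifferentiableAt.sub (by fun_prop) (by fun_prop)).differentiableWithinAt
    · intro t ht
      have h1 : HasDerivAt (fun t : ℝ => t ^ 2 - 2 * t + 2 - 2 * Real.exp (-t))
          (2 * t - 2 + 2 * Real.exp (-t)) t := by
        have e1 : HasDerivAt (fun t : ℝ => Real.exp (-t)) (-Real.exp (-t)) t := by
          have := (Real.hasDerivAt_exp (-t)).comp t (hasDerivAt_neg t)
          exact this.congr_deriv (by ring)
        have e2 : HasDerivAt (fun t : ℝ => t ^ 2 - 2 * t + 2) (2 * t - 2) t := by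
          simpa using (((hasDerivAt_pow 2 t).sub ((hasDerivAt_id t).const_mul 2)).add_const 2)
        exact (e2.sub (e1.const_mul 2)).congr_deriv (by ring)
      rw [h1.deriv]
      have := Real.add_one_le_exp (-t)
      nlinarith [Real.exp_pos (-t)]
  have h0 : (0:ℝ) ∈ Set.Ici (0:ℝ) := Set.self_mem_Ici
  have := key h0 hδ hδ
  simp at this
  nlinarith [this]

lemma aux_sum_ite {d : ℕ} (hd : 1 ≤ d) (A B : ℝ) :
    ∑ i : Fin d, (if (i : ℕ) < d - 1 then A else B) = ((d:ℝ) - 1) * A + B := by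
  rw [Fin.sum_univ_eq_sum_range (fun i => if i < d - 1 then A else B) d]
  obtain ⟨e, rfl⟩ : ∃ e, d = e + 1 := ⟨d - 1, by omega⟩
  rw [Finset.sum_range_succ]
  have h1 : ∀ i ∈ Finset.range e, (if i < e + 1 - 1 then A else B) = A := by
    intro i hi; rw [if_pos]; simpa using Finset.mem_range.mp hi
  rw [Finset.sum_congr rfl h1, Finset.sum_const, if_neg (by omega)]
  simp [Finset.card_range]

lemma aux_max_coord {d : ℕ} (hd : 2 ≤ d) (q : Fin d → ℝ)
    (hq0 : ∀ i, 0 ≤ q i) (hq1 : ∑ i, q i = 1)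
    (y : ℝ) (hyl : 1 / d ≤ y) (hyu : y ≤ 1)
    (hent : ∑ i, Real.negMulLog (q i)
      = Real.negMulLog y + ((d:ℝ) - 1) * Real.negMulLog ((1 - y) / ((d:ℝ) - 1)))
    (j : Fin d) : q j ≤ y := by
  set r : ℝ := (d:ℝ) - 1 with hr
  have hd1 : (1:ℝ) ≤ r := by
    have : (2:ℝ) ≤ (d:ℝ) := by exact_mod_cast hd
    simp [hr]; linarith
  have hrpos : 0 < r := by linarith
  have hdpos : (0:ℝ) < d := by positivity
  set M : ℝ → ℝ := fun m => Real.negMulLog m + r * Real.negMulLog ((1 - m) / r) with hM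
  -- M is strictly antitone on [1/d, 1]
  have hanti : StrictAntiOn M (Set.Icc (1/(d:ℝ)) 1) := by
    apply strictAntiOn_of_deriv_neg (convex_Icc _ _)
    · fun_prop
    · intro m hm
      rw [interior_Icc] at hm
      obtain ⟨hm1, hm2⟩ := hm
      have hm0 : 0 < m := lt_trans (by positivity) hm1
      have hm3 : 0 < (1 - m) / r := by
        apply div_pos; linarith; exact hrpos
      have h1 : HasDerivAt Real.negMulLog (-Real.log m - 1) m :=
        Real.hasDerivAt_negMulLog (ne_of_gt hm0)
      have h2 : HasDerivAt (fun m : ℝ => (1 - m) / r) (-1 / r) m := by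
        simpa using ((hasDerivAt_id m).const_sub 1).div_const r
      have h3 : HasDerivAt (fun m : ℝ => Real.negMulLog ((1 - m) / r))
          ((-Real.log ((1 - m) / r) - 1) * (-1 / r)) m :=
        by have := (Real.hasDerivAt_negMulLog (ne_of_gt hm3)).comp m h2; exact this
      have h4 : HasDerivAt M
          ((-Real.log m - 1) + r * ((-Real.log ((1 - m) / r) - 1) * (-1 / r))) m :=
        h1.add (h3.const_mul r)
      rw [h4.deriv]
      have hr0 : r ≠ 0 := ne_of_gt hrpos
      have heq : (-Real.log m - 1) + r * ((-Real.log ((1 - m) / r) - 1) * (-1 / r))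
          = Real.log ((1 - m) / r) - Real.log m := by field_simp; ring
      rw [heq, sub_neg]
      apply Real.log_lt_log hm3
      rw [div_lt_iff₀ hrpos]
      -- 1 - m < m * r  ⇔  1 < m * d
      have : 1 < m * d := by
        calc (1:ℝ) = (1/(d:ℝ)) * d := by field_simp
        _ < m * d := by apply mul_lt_mul_of_pos_right hm1 hdpos
      nlinarith
  -- q j ≤ 1
  have hqj1 : q j ≤ 1 := by
    rw [← hq1]
    exact Finset.single_le_sum (fun i _ => hq0 i) (Finset.mem_univ j)
  by_contra hcon
  push_neg at hcon
  -- Jensen: entropy of the rest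
  have hcard : (Finset.univ.erase j).card = d - 1 := by
    rw [Finset.card_erase_of_mem (Finset.mem_univ j)]
    simp
  have hcardR : ((Finset.univ.erase j).card : ℝ) = r := by
    rw [hcard]; rw [hr]; push_cast [Nat.cast_sub (by omega : 1 ≤ d)]; ring
  have hsum_erase : ∑ i ∈ Finset.univ.erase j, q i = 1 - q j := by
    rw [← hq1]
    rw [Finset.sum_erase_eq_sub (Finset.mem_univ j)]
  have hjensen : ∑ i ∈ Finset.univ.erase j, (1/r) • Real.negMulLog (q i)
      ≤ Real.negMulLog (∑ i ∈ Finset.univ.erase j, (1/r) • q i) := by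
    apply Real.concaveOn_negMulLog.le_map_sum
    · intro i _; positivity
    · rw [Finset.sum_const, nsmul_eq_mul, hcardR]
      field_simp
    · intro i _; exact hq0 i
  have hsum2 : ∑ i ∈ Finset.univ.erase j, (1/r) • q i = (1 - q j) / r := by
    rw [← Finset.smul_sum, hsum_erase]; simp [smul_eq_mul]; ring
  rw [hsum2, ← Finset.smul_sum] at hjensen
  have hrest : ∑ i ∈ Finset.univ.erase j, Real.negMulLog (q i)
      ≤ r * Real.negMulLog ((1 - q j) / r) := by
    have := smul_le_smul_of_nonneg_left hjensen (le_of_lt hrpos)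
    rw [smul_smul] at this
    have hr0 : r ≠ 0 := ne_of_gt hrpos
    simpa [smul_eq_mul, hr0, mul_one_div, mul_div_cancel_left₀] using this
  have hsplit : ∑ i, Real.negMulLog (q i)
      = Real.negMulLog (q j) + ∑ i ∈ Finset.univ.erase j, Real.negMulLog (q i) := by
    rw [← Finset.add_sum_erase _ _ (Finset.mem_univ j)]
  have hMqj : M y ≤ M (q j) := by
    rw [hM]
    simp only []
    calc Real.negMulLog y + r * Real.negMulLog ((1 - y) / r)
        = ∑ i, Real.negMulLog (q i) := hent.symm
      _ = Real.negMulLog (q j) + ∑ i ∈ Finset.univ.erase j, Real.negMulLog (q i) := hsplit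
      _ ≤ Real.negMulLog (q j) + r * Real.negMulLog ((1 - q j) / r) := by linarith [hrest]
  have hylt : M (q j) < M y := by
    apply hanti (Set.mem_Icc.mpr ⟨hyl, hyu⟩) (Set.mem_Icc.mpr ⟨le_trans hyl (le_of_lt hcon), hqj1⟩) hcon
  linarith

lemma aux_certificate {x y : ℝ} (hx : 0 < x) (hxy : x < y) :
    ∃ R S c : ℝ,
      (x * ((Real.log x) ^ 2 - R * Real.log x + S) + c = 0) ∧
      (y * ((Real.log y) ^ 2 - R * Real.log y + S) + c = 0) ∧
      (∀ t, 0 ≤ t → t ≤ y → t * ((Real.log t) ^ 2 - R * Real.log t + S) + c ≤ 0) := by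
  have hy : 0 < y := lt_trans hx hxy
  set lx : ℝ := Real.log x with hlx
  set ly : ℝ := Real.log y with hly
  have hlxy : lx < ly := Real.log_lt_log hx hxy
  set D : ℝ := y * (lx - ly) + (y - x) with hD
  have hDneg : D < 0 := by
    have hne : x / y ≠ 1 := by
      intro h; rw [div_eq_one_iff_eq (ne_of_gt hy)] at h; exact absurd h (ne_of_lt hxy)
    have h1 : Real.log (x / y) < x / y - 1 :=
      Real.log_lt_sub_one_of_pos (by positivity) hne
    rw [Real.log_div (ne_of_gt hx) (ne_of_gt hy)] at h1
    have h2 : y * (Real.log x - Real.log y) < y * (x / y - 1) :=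
      mul_lt_mul_of_pos_left h1 hy
    have h3 : y * (x / y - 1) = x - y := by field_simp
    rw [h3] at h2
    rw [hD]; linarith
  have hDne : D ≠ 0 := ne_of_lt hDneg
  set R : ℝ := (y * (lx ^ 2 - ly ^ 2) + 2 * lx * (y - x)) / D with hR
  set S : ℝ := R * (lx + 1) - lx * (lx + 2) with hS
  set c : ℝ := -x * (R - 2 * lx) with hc
  have hRD : R * D = y * (lx ^ 2 - ly ^ 2) + 2 * lx * (y - x) := by
    rw [hR]; field_simp
  have h5 : (R - 2 * lx) * D = -(y * (ly - lx) ^ 2) := by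
    have h : (R - 2 * lx) * D = R * D - 2 * lx * D := by ring
    rw [h, hRD, hD]; ring
  have h6 : 0 ≤ R - 2 * lx := by
    nlinarith [sq_nonneg (ly - lx), h5, hDneg, hy]
  have hcneg : c ≤ 0 := by
    rw [hc]; nlinarith
  set ρ : ℝ := R - 2 - lx with hρ
  have h7 : (R - 2 * lx - 2) * D = -(y * ((ly - lx) ^ 2 - 2 * (ly - lx) + 2) - 2 * x) := by
    have h : (R - 2 * lx - 2) * D = R * D - (2 * lx + 2) * D := by ring
    rw [h, hRD, hD]; ring
  have hexp : Real.exp (-(ly - lx)) = x / y := by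
    rw [neg_sub, hlx, hly, ← Real.exp_log hx, ← Real.exp_log hy]
    rw [Real.log_exp, Real.log_exp, ← Real.exp_sub]
  have h8 : 0 ≤ y * ((ly - lx) ^ 2 - 2 * (ly - lx) + 2) - 2 * x := by
    have := aux_two_exp (le_of_lt (sub_pos.mpr hlxy))
    rw [hexp] at this
    have h9 : y * (2 * (x / y)) ≤ y * ((ly - lx) ^ 2 - 2 * (ly - lx) + 2) :=
      mul_le_mul_of_nonneg_left this (le_of_lt hy)
    have h10 : y * (2 * (x / y)) = 2 * x := by field_simp
    linarith [h10 ▸ h9]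
  have hρge : lx ≤ ρ := by
    rw [hρ]
    nlinarith [h7, hDneg, h8]
  -- the function K
  set K : ℝ → ℝ := fun s => Real.exp s * (s ^ 2 - R * s + S) + c with hK
  have hK' : ∀ s : ℝ, HasDerivAt K (Real.exp s * ((s - lx) * (s - ρ))) s := by
    intro s
    have hpoly : HasDerivAt (fun s : ℝ => s ^ 2 - R * s + S) (2 * s - R) s := by
      simpa using ((hasDerivAt_pow 2 s).sub ((hasDerivAt_id s).const_mul R)).add_const S
    have h := ((Real.hasDerivAt_exp s).mul hpoly).add_const c
    exact h.congr_deriv (by rw [hρ, hS]; ring)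
  have hKdiff : Differentiable ℝ K := fun s => (hK' s).differentiableAt
  have hKlx : K lx = 0 := by
    rw [hK]
    simp only []
    rw [hlx, Real.exp_log hx, ← hlx, hS, hc]; ring
  have hKly : K ly = 0 := by
    rw [hK]
    simp only []
    rw [hly, Real.exp_log hy, ← hly, hS, hc]
    linear_combination hRD
  -- K ≤ 0 on (-∞, ly]
  have hKle : ∀ s, s ≤ ly → K s ≤ 0 := by
    intro s hs
    rcases le_or_gt s lx with h1 | h1
    · -- monotone on [s, lx]
      have hmono : MonotoneOn K (Set.Icc s lx) := by
        apply monotoneOn_of_deriv_nonneg (convex_Icc _ _) hKdiff.continuous.continuousOn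
          (fun w _ => (hKdiff w).differentiableWithinAt)
        intro w hw
        rw [interior_Icc] at hw
        rw [(hK' w).deriv]
        have hw1 : w < lx := hw.2
        have hprod : 0 ≤ (w - lx) * (w - ρ) :=
          mul_nonneg_of_nonpos_of_nonpos (by linarith : w - lx ≤ 0) (by linarith : w - ρ ≤ 0)
        exact mul_nonneg (Real.exp_pos w).le hprod
      have := hmono (Set.mem_Icc.mpr ⟨le_refl s, h1⟩) (Set.mem_Icc.mpr ⟨h1, le_refl lx⟩) h1
      linarith [hKlx]
    · rcases le_or_gt s ρ with h2 | h2
      · -- antitone on [lx, ρ]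
        have hanti : AntitoneOn K (Set.Icc lx ρ) := by
          apply antitoneOn_of_deriv_nonpos (convex_Icc _ _) hKdiff.continuous.continuousOn
            (fun w _ => (hKdiff w).differentiableWithinAt)
          intro w hw
          rw [interior_Icc] at hw
          rw [(hK' w).deriv]
          have hprod : (w - lx) * (w - ρ) ≤ 0 :=
            mul_nonpos_iff.mpr (Or.inl ⟨by linarith [hw.1], by linarith [hw.2]⟩)
          exact mul_nonpos_iff.mpr (Or.inl ⟨(Real.exp_pos w).le, hprod⟩)
        have := hanti (Set.mem_Icc.mpr ⟨le_refl lx, hρge⟩)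
          (Set.mem_Icc.mpr ⟨le_of_lt h1, h2⟩) (le_of_lt h1)
        linarith [hKlx]
      · -- monotone on [ρ, ly]
        have hmono : MonotoneOn K (Set.Icc ρ ly) := by
          apply monotoneOn_of_deriv_nonneg (convex_Icc _ _) hKdiff.continuous.continuousOn
            (fun w _ => (hKdiff w).differentiableWithinAt)
          intro w hw
          rw [interior_Icc] at hw
          rw [(hK' w).deriv]
          have hprod : 0 ≤ (w - lx) * (w - ρ) :=
            mul_nonneg (by linarith [hw.1, hρge]) (by linarith [hw.1])
          exact mul_nonneg (Real.exp_pos w).le hprod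
        have hρly : ρ ≤ ly := le_trans (le_of_lt h2) hs
        have := hmono (Set.mem_Icc.mpr ⟨le_of_lt h2, hs⟩)
          (Set.mem_Icc.mpr ⟨hρly, le_refl ly⟩) hs
        linarith [hKly]
  refine ⟨R, S, c, ?_, ?_, ?_⟩
  · have := hKlx
    rw [hK] at this
    simp only [] at this
    rw [hlx, Real.exp_log hx, ← hlx] at this
    exact this
  · have := hKly
    rw [hK] at this
    simp only [] at this
    rw [hly, Real.exp_log hy, ← hly] at this
    exact this
  · intro t ht0 hty
    rcases eq_or_lt_of_le ht0 with h | h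
    · rw [← h]; simpa using hcneg
    · have hlt : Real.log t ≤ ly := Real.log_le_log h hty
      have := hKle (Real.log t) hlt
      rw [hK] at this
      simp only [] at this
      rw [Real.exp_log h] at this
      exact this

theorem stmt_11 (d : ℕ) (hd : 2 ≤ d)
    (H₀ : ℝ) (hH₀ : H₀ ∈ Set.Icc (0:ℝ) (Real.log d))
    (x : ℝ) (hx : x ∈ Set.Icc (0:ℝ) (1 / d))
    (qstar : Fin d → ℝ)
    (hqstar : qstar = fun i : Fin d => if (i : ℕ) < d - 1 then x else 1 - ((d:ℝ) - 1) * x)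
    (hent : shannonEntropy qstar = H₀) :
    (∀ q : Fin d → ℝ, (∀ i, 0 ≤ q i) → ∑ i, q i = 1 → shannonEntropy q = H₀ →
      surprisalSq q ≤ ((d:ℝ) - 1) * x * (1 - ((d:ℝ) - 1) * x)
        * (Real.log x - Real.log (1 - ((d:ℝ) - 1) * x)) ^ 2 + H₀ ^ 2)
    ∧ surprisalSq qstar = ((d:ℝ) - 1) * x * (1 - ((d:ℝ) - 1) * x)
        * (Real.log x - Real.log (1 - ((d:ℝ) - 1) * x)) ^ 2 + H₀ ^ 2 := by
  obtain ⟨hx0, hxd⟩ := hx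
  have hd1 : 1 ≤ d := by omega
  have hdR : (2:ℝ) ≤ (d:ℝ) := by exact_mod_cast hd
  have hdpos : (0:ℝ) < d := by linarith
  set r : ℝ := (d:ℝ) - 1 with hrdef
  have hr1 : (1:ℝ) ≤ r := by rw [hrdef]; linarith
  have hrpos : (0:ℝ) < r := by linarith
  set y : ℝ := 1 - r * x with hydef
  set lx : ℝ := Real.log x with hlxdef
  set ly : ℝ := Real.log y with hlydef
  -- basic facts about y
  have hyd : 1 / (d:ℝ) ≤ y := by
    rw [hydef]
    have : r * x ≤ r * (1/d) := mul_le_mul_of_nonneg_left hxd (le_of_lt hrpos)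
    have h2 : r * (1/d) = 1 - 1/d := by rw [hrdef]; field_simp
    linarith
  have hy1 : y ≤ 1 := by
    rw [hydef]; nlinarith
  have hypos : 0 < y := lt_of_lt_of_le (by positivity) hyd
  -- splitting sums over qstar
  have hsplit : ∀ F : ℝ → ℝ, ∑ i, F (qstar i) = r * F x + F y := by
    intro F
    have h1 : ∀ i : Fin d, F (qstar i) = if (i : ℕ) < d - 1 then F x else F y := by
      intro i
      rw [hqstar]
      by_cases h : (i : ℕ) < d - 1 <;> simp [h, hydef, hrdef]
    rw [Finset.sum_congr rfl (fun i _ => h1 i), aux_sum_ite hd1]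
  -- entropy of qstar
  have hentX : H₀ = r * Real.negMulLog x + Real.negMulLog y := by
    rw [← hent, shannonEntropy, hsplit Real.negMulLog]
  have hH : H₀ = -(r * x * lx) - y * ly := by
    rw [hentX]; simp [Real.negMulLog]; ring
  have hyrel : r * x + y = 1 := by rw [hydef]; ring
  -- Part 2
  have hLstar : surprisalSq qstar = r * (x * lx ^ 2) + y * ly ^ 2 := by
    rw [surprisalSq, hsplit (fun t => t * (Real.log t) ^ 2)]
  have hpart2 : surprisalSq qstar = r * x * y * (lx - ly) ^ 2 + H₀ ^ 2 := by
    rw [hLstar, hH]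
    linear_combination (-(r * x * lx ^ 2) - y * ly ^ 2) * hyrel
  have hgoal2 : surprisalSq qstar = r * x * (1 - r * x)
      * (Real.log x - Real.log (1 - r * x)) ^ 2 + H₀ ^ 2 := by
    rw [← hydef, ← hlxdef, ← hlydef]; exact hpart2
  refine ⟨?_, hgoal2⟩
  -- Part 1
  intro q hq0 hq1 hqent
  -- every coordinate of q is at most y
  have hql : ∀ i, q i ≤ y := by
    intro j
    apply aux_max_coord hd q hq0 hq1 y hyd hy1 _ j
    have hxy' : (1 - y) / r = x := by rw [hydef]; field_simp; ring
    rw [hxy']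
    rw [← shannonEntropy, hqent, hentX]; ring
  -- case on x
  rcases eq_or_lt_of_le hx0 with hx0' | hx0'
  · -- x = 0 : entropy is 0, distribution is deterministic
    have hxz : x = 0 := hx0'.symm
    have hyz : y = 1 := by rw [hydef, hxz]; ring
    have hH0 : H₀ = 0 := by rw [hentX, hxz, hyz]; simp
    have hq1' : ∀ i, q i ≤ 1 := by
      intro i
      rw [← hq1]
      exact Finset.single_le_sum (fun k _ => hq0 k) (Finset.mem_univ i)
    have hterm : ∀ i ∈ Finset.univ, Real.negMulLog (q i) = 0 := by
      rw [← Finset.sum_eq_zero_iff_of_nonneg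
        (fun i _ => Real.negMulLog_nonneg (hq0 i) (hq1' i))]
      rw [← shannonEntropy, hqent, hH0]
    have hLq : surprisalSq q = 0 := by
      rw [surprisalSq]
      apply Finset.sum_eq_zero
      intro i hi
      have h := hterm i hi
      rw [Real.negMulLog] at h
      have h2 : q i * Real.log (q i) = 0 := by linear_combination -h
      calc q i * Real.log (q i) ^ 2 = (q i * Real.log (q i)) * Real.log (q i) := by ring
        _ = 0 := by rw [h2]; ring
    rw [hLq, hxz, hH0]
    simp
  · rcases eq_or_lt_of_le hxd with hxd' | hxd'
    · -- x = 1/d : the uniform case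
      have hyx : y = x := by rw [hydef, hxd', hrdef]; field_simp; ring
      have hqall : ∀ i, q i = x := by
        intro i
        by_contra hne
        have hlt : q i < x := lt_of_le_of_ne (hyx ▸ hql i) hne
        have hsum : ∑ k, q k < ∑ _k : Fin d, x :=
          Finset.sum_lt_sum (fun k _ => hyx ▸ hql k) ⟨i, Finset.mem_univ i, hlt⟩
        rw [Finset.sum_const, Finset.card_univ, Fintype.card_fin, nsmul_eq_mul] at hsum
        rw [hq1] at hsum
        have : (d:ℝ) * x = 1 := by rw [hxd']; field_simp
        linarith
      have hLq : surprisalSq q = (d:ℝ) * (x * lx ^ 2) := by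
        rw [surprisalSq]
        rw [Finset.sum_congr rfl (fun i _ => by rw [hqall i])]
        rw [Finset.sum_const, Finset.card_univ, Fintype.card_fin, nsmul_eq_mul, hlxdef]
      have hlyx : ly = lx := by rw [hlydef, hlxdef, hyx]
      have hLqstar : surprisalSq qstar = (d:ℝ) * (x * lx ^ 2) := by
        rw [hLstar, hyx, hlyx, hrdef]; ring
      rw [hLq, ← hLqstar, hgoal2]
    · -- main case : 0 < x < 1/d
      have hxy : x < y := by
        rw [hydef]
        have : (d:ℝ) * x < 1 := by
          calc (d:ℝ) * x < (d:ℝ) * (1/d) := mul_lt_mul_of_pos_left hxd' hdpos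
          _ = 1 := by field_simp
        rw [hrdef]; nlinarith
      obtain ⟨R, S, c, hcx, hcy, hcle⟩ := aux_certificate hx0' hxy
      rw [← hlxdef] at hcx
      rw [← hlydef] at hcy
      -- expansion of the certificate sum
      have expand : ∀ p : Fin d → ℝ, (∑ i, p i = 1) → (shannonEntropy p = H₀) →
          ∑ i, (p i * (Real.log (p i)) ^ 2 - R * (p i * Real.log (p i)) + S * p i + c)
            = surprisalSq p + R * H₀ + S + (d:ℝ) * c := by
        intro p hp1 hpe
        have h1 : ∑ i, (p i * Real.log (p i)) = -H₀ := by
          rw [← hpe, shannonEntropy]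
          rw [← Finset.sum_neg_distrib]
          apply Finset.sum_congr rfl
          intro i _
          rw [Real.negMulLog]; ring
        rw [Finset.sum_add_distrib, Finset.sum_add_distrib, Finset.sum_sub_distrib,
          ← Finset.mul_sum, ← Finset.mul_sum, h1, hp1, Finset.sum_const, Finset.card_univ,
          Fintype.card_fin, nsmul_eq_mul, ← surprisalSq]
        ring
      -- for qstar : sum is zero
      have hstar0 : surprisalSq qstar + R * H₀ + S + (d:ℝ) * c = 0 := by
        have hq1star : ∑ i, qstar i = 1 := by
          have h := hsplit (fun t => t)
          simpa [hyrel] using h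
        rw [← expand qstar hq1star hent]
        rw [hsplit (fun t => t * (Real.log t) ^ 2 - R * (t * Real.log t) + S * t + c)]
        rw [← hlxdef, ← hlydef]
        linear_combination r * hcx + hcy
      -- for q : sum is nonpositive
      have hqle : surprisalSq q + R * H₀ + S + (d:ℝ) * c ≤ 0 := by
        rw [← expand q hq1 hqent]
        apply Finset.sum_nonpos
        intro i _
        have := hcle (q i) (hq0 i) (hql i)
        nlinarith [this]
      have : surprisalSq q ≤ surprisalSq qstar := by linarith
      calc surprisalSq q ≤ surprisalSq qstar := this
        _ = _ := hgoal2
end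

section
/- For any probability distribution q on d elements, the variance of the surprisal V(q) := Σ_i q_i (log q_i)² − (Σ_i q_i log q_i)² satisfies V(q) ≤ (1 + log(d−1))/2 + (log(d−1))²/4. -/
open Real Finset

set_option maxHeartbeats 1000000

lemma log_le_div_e' {x : ℝ} (hx : 0 < x) : Real.exp 1 * Real.log x ≤ x := by
  have h := Real.log_le_sub_one_of_pos (show 0 < x / Real.exp 1 by positivity)
  rw [Real.log_div (ne_of_gt hx) (Real.exp_ne_zero 1), Real.log_exp] at h
  have hE0 : 0 < Real.exp 1 := Real.exp_pos 1
  have := mul_le_mul_of_nonneg_left h (le_of_lt hE0)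
  rw [mul_sub, mul_sub, mul_div_cancel₀ _ (ne_of_gt hE0)] at this
  linarith

lemma log_le_div_e {x : ℝ} (hx : 0 < x) : Real.log x ≤ x / Real.exp 1 := by
  have h := log_le_div_e' hx
  have hE0 : 0 < Real.exp 1 := Real.exp_pos 1
  rw [le_div_iff₀ hE0]
  nlinarith [h]

lemma aux_neg_mul_log {r : ℝ} (h0 : 0 < r) (_h1 : r ≤ 1) :
    -(r * Real.log r) ≤ (Real.exp 1)⁻¹ := by
  have h := log_le_div_e (inv_pos.mpr h0)
  rw [Real.log_inv] at h
  have hE : 0 < Real.exp 1 := Real.exp_pos 1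
  have h2 : -Real.log r * r ≤ (r⁻¹ / Real.exp 1) * r :=
    mul_le_mul_of_nonneg_right h (le_of_lt h0)
  have hr : (r⁻¹ / Real.exp 1) * r = (Real.exp 1)⁻¹ := by field_simp
  nlinarith

lemma aux_mul_log_sq {r : ℝ} (h0 : 0 < r) (h1 : r ≤ 1) :
    r * (Real.log r)^2 ≤ 4 / (Real.exp 1)^2 := by
  have hs0 : 0 < Real.sqrt r := Real.sqrt_pos.mpr h0
  have hs1 : Real.sqrt r ≤ 1 := by
    rw [show (1:ℝ) = Real.sqrt 1 by simp]
    exact Real.sqrt_le_sqrt h1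
  have hkey := aux_neg_mul_log hs0 hs1
  have hlog : Real.log (Real.sqrt r) = Real.log r / 2 := Real.log_sqrt (le_of_lt h0)
  have hsq : Real.sqrt r * Real.sqrt r = r := Real.mul_self_sqrt (le_of_lt h0)
  have h2 : 0 ≤ -(Real.sqrt r * Real.log (Real.sqrt r)) := by
    have : Real.log (Real.sqrt r) ≤ 0 := Real.log_nonpos (le_of_lt hs0) hs1
    nlinarith
  have hE : 0 < Real.exp 1 := Real.exp_pos 1
  have h3 : (-(Real.sqrt r * Real.log (Real.sqrt r)))^2 ≤ ((Real.exp 1)⁻¹)^2 := by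
    apply sq_le_sq' <;> nlinarith
  have h4 : r * (Real.log r)^2 = 4 * (-(Real.sqrt r * Real.log (Real.sqrt r)))^2 := by
    rw [hlog]; nlinarith [hsq]
  rw [h4, show (4:ℝ)/(Real.exp 1)^2 = 4 * ((Real.exp 1)⁻¹)^2 by field_simp]
  nlinarith

lemma varA (d : ℕ) (q : Fin d → ℝ) (hq0 : ∀ i, 0 ≤ q i) (hq1 : ∑ i, q i = 1)
    (c a b : ℝ)
    (hpt : ∀ x : ℝ, 0 ≤ x → x ≤ 1 → x * (Real.log x + c)^2 ≤ (c^2 + a) * x + b) :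
    ∑ i, q i * (Real.log (q i))^2 - (∑ i, q i * Real.log (q i))^2 ≤ c^2 + a + d * b := by
  have hqle1 : ∀ i, q i ≤ 1 := by
    intro i
    have := Finset.single_le_sum (f := q) (fun j _ => hq0 j) (Finset.mem_univ i)
    rw [hq1] at this; exact this
  have expand : ∑ i, q i * (Real.log (q i) + c)^2
      = (∑ i, q i * (Real.log (q i))^2) + 2*c*(∑ i, q i * Real.log (q i)) + c^2 := by
    have h1 : ∑ i, q i * (Real.log (q i) + c)^2
        = ∑ i, (q i * (Real.log (q i))^2 + (2*c) * (q i * Real.log (q i)) + c^2 * q i) :=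
      Finset.sum_congr rfl (fun i _ => by ring)
    rw [h1, Finset.sum_add_distrib, Finset.sum_add_distrib, ← Finset.mul_sum, ← Finset.mul_sum,
      hq1, mul_one]
  have hbound : ∑ i, q i * (Real.log (q i) + c)^2 ≤ (c^2 + a) + d * b := by
    calc ∑ i, q i * (Real.log (q i) + c)^2
        ≤ ∑ i : Fin d, ((c^2 + a) * q i + b) :=
          Finset.sum_le_sum (fun i _ => hpt (q i) (hq0 i) (hqle1 i))
      _ = (c^2 + a) * (∑ i, q i) + d * b := by
          rw [Finset.sum_add_distrib, ← Finset.mul_sum, Finset.sum_const, Finset.card_univ,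
            Fintype.card_fin, nsmul_eq_mul]
      _ = (c^2 + a) + d * b := by rw [hq1, mul_one]
  set S := ∑ i, q i * Real.log (q i)
  set T := ∑ i, q i * (Real.log (q i))^2
  rw [expand] at hbound
  nlinarith [sq_nonneg (S + c)]

lemma poly_pointwise (c a b : ℝ) (hb : 0 ≤ b)
    (hpoly : ∀ t : ℝ, 0 ≤ t →
      t^2 - 2*c*t - a ≤ b*(1+t+t^2/2+t^3/6+t^4/24+t^5/120+t^6/720)) :
    ∀ x : ℝ, 0 ≤ x → x ≤ 1 → x * (Real.log x + c)^2 ≤ (c^2 + a) * x + b := by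
  intro x hx0 hx1
  rcases eq_or_lt_of_le hx0 with h | h
  · simp [← h]
    have := hpoly 0 le_rfl
    nlinarith
  · set t := -Real.log x with htdef
    have ht0 : 0 ≤ t := by
      have := Real.log_nonpos (le_of_lt h) hx1
      simp [htdef]; linarith
    have hxe : x = Real.exp (-t) := by
      rw [htdef, neg_neg, Real.exp_log h]
    have hexp : b*(1+t+t^2/2+t^3/6+t^4/24+t^5/120+t^6/720) ≤ b * Real.exp t := by
      apply mul_le_mul_of_nonneg_left _ hb
      have hs := Real.sum_le_exp_of_nonneg ht0 7
      simp [Finset.sum_range_succ, Nat.factorial] at hs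
      nlinarith [hs]
    have hkey : t^2 - 2*c*t - a ≤ b * Real.exp t := le_trans (hpoly t ht0) hexp
    have hx' : 0 < x := h
    have : x * (t^2 - 2*c*t - a) ≤ x * (b * Real.exp t) :=
      mul_le_mul_of_nonneg_left hkey (le_of_lt hx')
    have hxx : x * (b * Real.exp t) = b := by
      rw [hxe]
      rw [show Real.exp (-t) * (b * Real.exp t) = b * (Real.exp (-t) * Real.exp t) by ring,
        ← Real.exp_add]
      simp
    have hlx : Real.log x = -t := by rw [htdef, neg_neg]
    rw [hlx]
    nlinarith [this, hxx]

lemma pointwise_big (K : ℝ) (hK : 1 ≤ K) :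
    ∀ x : ℝ, 0 ≤ x → x ≤ 1 →
      x * (Real.log x + Real.log K / 2)^2
        ≤ ((Real.log K / 2)^2 + 0) * x
          + (4/(Real.exp 1)^2 + Real.log K / Real.exp 1) / K := by
  intro x hx0 hx1
  have hK0 : 0 < K := lt_of_lt_of_le one_pos hK
  have hL0 : 0 ≤ Real.log K := Real.log_nonneg hK
  have hE : 0 < Real.exp 1 := Real.exp_pos 1
  have hb : 0 ≤ (4/(Real.exp 1)^2 + Real.log K / Real.exp 1) / K := by positivity
  rcases eq_or_lt_of_le hx0 with h | hx
  · rw [← h]; simpa using hb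
  · set L := Real.log K with hLdef
    have hlogx : Real.log x ≤ 0 := Real.log_nonpos (le_of_lt hx) hx1
    suffices hphi : x * Real.log x * (Real.log x + L)
        ≤ (4/(Real.exp 1)^2 + L / Real.exp 1) / K by nlinarith [hphi]
    rcases le_or_gt 1 (x * K) with hcase | hcase
    · have hpos : 0 ≤ Real.log x + L := by
        have h9 := Real.log_nonneg hcase
        rw [Real.log_mul (ne_of_gt hx) (ne_of_gt hK0)] at h9
        linarith
      have h8 : x * Real.log x * (Real.log x + L) ≤ 0 :=
        mul_nonpos_of_nonpos_of_nonneg (mul_nonpos_of_nonneg_of_nonpos hx0 hlogx) hpos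
      have hb' : 0 ≤ (4/(Real.exp 1)^2 + L / Real.exp 1) / K := by positivity
      linarith
    · set r := x * K with hrdef
      have hr0 : 0 < r := mul_pos hx hK0
      have hr1 : r ≤ 1 := le_of_lt hcase
      have hlogr : Real.log r = Real.log x + L := Real.log_mul (ne_of_gt hx) (ne_of_gt hK0)
      have hlx : Real.log x = Real.log r - L := by rw [hlogr]; ring
      have ha1 := aux_neg_mul_log hr0 hr1
      have ha2 := aux_mul_log_sq hr0 hr1
      have ha3 : L * (-(r * Real.log r)) ≤ L * (Real.exp 1)⁻¹ :=
        mul_le_mul_of_nonneg_left ha1 hL0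
      rw [le_div_iff₀ hK0]
      have hxr : x = r / K := by rw [hrdef]; field_simp
      have hid : x * Real.log x * (Real.log x + L) * K
          = r * (Real.log r)^2 - L * (r * Real.log r) := by
        rw [hlx, hxr]; field_simp; ring
      rw [hid]
      have hdiv : L / Real.exp 1 = L * (Real.exp 1)⁻¹ := div_eq_mul_inv _ _
      rw [hdiv]
      linarith [ha2, ha3]

lemma tlem (t : ℝ) (ht : 1 ≤ t) : t * (Real.log t)^2 ≤ (1+t)^2/2 := by
  have ht0 : 0 < t := lt_of_lt_of_le one_pos ht
  have hlt0 : 0 ≤ Real.log t := Real.log_nonneg ht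
  have hE : (2.7182818 : ℝ) < Real.exp 1 := by
    have := Real.exp_one_gt_d9; linarith
  have hE0 : 0 < Real.exp 1 := Real.exp_pos 1
  have hE2 : (7.389:ℝ) ≤ (Real.exp 1)^2 := by nlinarith
  have hEsq : (0:ℝ) < (Real.exp 1)^2 := by positivity
  have hu0 : 0 < Real.sqrt t := Real.sqrt_pos.mpr ht0
  have hu2 : Real.sqrt t * Real.sqrt t = t := Real.mul_self_sqrt (le_of_lt ht0)
  have hlogu : Real.log t = 2 * Real.log (Real.sqrt t) := by
    rw [Real.log_sqrt (le_of_lt ht0)]; ring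
  apply le_of_mul_le_mul_left _ hEsq
  rcases le_or_gt t 20 with hcase | hcase
  · have h1 : Real.exp 1 * Real.log (Real.sqrt t) ≤ Real.sqrt t := log_le_div_e' hu0
    have h2 : Real.exp 1 * Real.log t ≤ 2 * Real.sqrt t := by rw [hlogu]; linarith
    have h3 : (Real.exp 1 * Real.log t)^2 ≤ 4 * t := by
      nlinarith [mul_nonneg (le_of_lt hE0) hlt0, hu2, hu0]
    have h5 : (Real.exp 1)^2 * (t * (Real.log t)^2) ≤ 4 * t^2 := by nlinarith [h3, ht0]
    have h6 : 8 * t^2 ≤ (Real.exp 1)^2 * (1+t)^2 := by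
      nlinarith [mul_nonneg (sub_nonneg.mpr ht) (sub_nonneg.mpr hcase), sq_nonneg (1+t)]
    nlinarith [h5, h6]
  · set u := Real.sqrt t with hudef
    set s := Real.sqrt u with hsdef
    have hs0 : 0 < s := Real.sqrt_pos.mpr hu0
    have hs2 : s * s = u := Real.mul_self_sqrt (le_of_lt hu0)
    have hlogs : Real.log t = 4 * Real.log s := by
      rw [hlogu, hsdef, Real.log_sqrt (le_of_lt hu0)]; ring
    have h1 : Real.exp 1 * Real.log s ≤ s := log_le_div_e' hs0
    have h2 : Real.exp 1 * Real.log t ≤ 4 * s := by rw [hlogs]; linarith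
    have h3 : (Real.exp 1 * Real.log t)^2 ≤ 16 * u := by
      nlinarith [mul_nonneg (le_of_lt hE0) hlt0, hs2, hs0]
    have ht2 : t = u^2 := by rw [← hu2]; ring
    have h5 : (Real.exp 1)^2 * (t * (Real.log t)^2) ≤ 16 * u^3 := by
      nlinarith [h3, ht0, ht2, hu0]
    have hu447 : (4.47 : ℝ) ≤ u := by
      rw [hudef, show (4.47:ℝ) = Real.sqrt (4.47^2) by rw [Real.sqrt_sq (by norm_num)]]
      apply Real.sqrt_le_sqrt; nlinarith
    have h7 : (32:ℝ) ≤ (Real.exp 1)^2 * u := by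
      nlinarith [mul_nonneg (sub_nonneg.mpr hE2) (sub_nonneg.mpr hu447)]
    have h8 : u^4 ≤ (1+t)^2 := by rw [ht2]; nlinarith [sq_nonneg u]
    have h9 : 32 * u^3 ≤ (Real.exp 1)^2 * (1+t)^2 := by
      have hstep : 32 * u^3 ≤ ((Real.exp 1)^2 * u) * u^3 := by
        nlinarith [mul_nonneg (sub_nonneg.mpr h7) (le_of_lt (pow_pos hu0 3))]
      calc 32*u^3 ≤ ((Real.exp 1)^2 * u) * u^3 := hstep
        _ = (Real.exp 1)^2 * u^4 := by ring
        _ ≤ (Real.exp 1)^2 * (1+t)^2 := mul_le_mul_of_nonneg_left h8 (sq_nonneg _)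
    nlinarith [h5, h9]

lemma two_point {a b : ℝ} (ha : 0 ≤ a) (hb : 0 ≤ b) (hab : a + b = 1) :
    a * b * (Real.log a - Real.log b)^2 ≤ 1/2 := by
  rcases eq_or_lt_of_le ha with h | ha'
  · rw [← h]; norm_num
  rcases eq_or_lt_of_le hb with h | hb'
  · rw [← h]; norm_num
  have key : ∀ u v : ℝ, 0 < u → 0 < v → v ≤ u →
      u * v * (Real.log u - Real.log v)^2 ≤ (u+v)^2/2 := by
    intro u v hu hv hvu
    have hdiv : Real.log u - Real.log v = Real.log (u/v) :=
      (Real.log_div (ne_of_gt hu) (ne_of_gt hv)).symm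
    have ht1 : 1 ≤ u/v := (one_le_div hv).mpr hvu
    have htl := tlem (u/v) ht1
    have hv2 : (0:ℝ) < v^2 := by positivity
    have h2 : v^2 * ((u/v) * (Real.log (u/v))^2) ≤ v^2 * ((1+u/v)^2/2) :=
      mul_le_mul_of_nonneg_left htl (le_of_lt hv2)
    have e1 : v^2 * ((u/v) * (Real.log (u/v))^2) = u * v * (Real.log (u/v))^2 := by
      field_simp
    have e2 : v^2 * ((1+u/v)^2/2) = (v+u)^2/2 := by
      field_simp
    rw [e1, e2] at h2
    rw [hdiv]
    calc u * v * (Real.log (u/v))^2 ≤ (v+u)^2/2 := h2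
      _ = (u+v)^2/2 := by ring
  rcases le_total b a with hba | hab'
  · have := key a b ha' hb' hba
    calc a*b*(Real.log a - Real.log b)^2 ≤ (a+b)^2/2 := this
      _ = 1/2 := by rw [hab]; norm_num
  · have := key b a hb' ha' hab'
    calc a*b*(Real.log a - Real.log b)^2 = b*a*(Real.log b - Real.log a)^2 := by ring
      _ ≤ (b+a)^2/2 := this
      _ = 1/2 := by rw [show b+a=1 by linarith]; norm_num

lemma poly3 (t : ℝ) (ht : 0 ≤ t) :
    t^2 - 2*(0.46:ℝ)*t - (-0.36) ≤ (0.365:ℝ)*(1+t+t^2/2+t^3/6+t^4/24+t^5/120+t^6/720) := by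
  nlinarith [sq_nonneg (t - 12/5), mul_nonneg ht (sq_nonneg (t - 12/5)),
    mul_nonneg (mul_nonneg ht ht) (sq_nonneg (t - 12/5)),
    mul_nonneg (mul_nonneg (mul_nonneg ht ht) ht) (sq_nonneg (t - 12/5)),
    mul_nonneg (mul_nonneg (mul_nonneg (mul_nonneg ht ht) ht) ht) (sq_nonneg (t - 12/5)),
    sq_nonneg (t^2 - 4*t), mul_nonneg ht ht]

lemma poly4 (t : ℝ) (ht : 0 ≤ t) :
    t^2 - 2*(0.6:ℝ)*t - (-0.3) ≤ (0.305:ℝ)*(1+t+t^2/2+t^3/6+t^4/24+t^5/120+t^6/720) := by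
  nlinarith [sq_nonneg (t - 27/10), mul_nonneg ht (sq_nonneg (t - 27/10)),
    mul_nonneg (mul_nonneg ht ht) (sq_nonneg (t - 27/10)),
    mul_nonneg (mul_nonneg (mul_nonneg ht ht) ht) (sq_nonneg (t - 27/10)),
    mul_nonneg (mul_nonneg (mul_nonneg (mul_nonneg ht ht) ht) ht) (sq_nonneg (t - 27/10)),
    mul_nonneg ht ht]

lemma poly5 (t : ℝ) (ht : 0 ≤ t) :
    t^2 - 2*(0.66:ℝ)*t - (-0.26) ≤ (0.28:ℝ)*(1+t+t^2/2+t^3/6+t^4/24+t^5/120+t^6/720) := by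
  nlinarith [sq_nonneg (t - 14/5), mul_nonneg ht (sq_nonneg (t - 14/5)),
    mul_nonneg (mul_nonneg ht ht) (sq_nonneg (t - 14/5)),
    mul_nonneg (mul_nonneg (mul_nonneg ht ht) ht) (sq_nonneg (t - 14/5)),
    mul_nonneg (mul_nonneg (mul_nonneg (mul_nonneg ht ht) ht) ht) (sq_nonneg (t - 14/5)),
    mul_nonneg ht ht]

lemma poly6 (t : ℝ) (ht : 0 ≤ t) :
    t^2 - 2*(0.78:ℝ)*t - (-0.22) ≤ (0.24:ℝ)*(1+t+t^2/2+t^3/6+t^4/24+t^5/120+t^6/720) := by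
  nlinarith [sq_nonneg (t - 3), mul_nonneg ht (sq_nonneg (t - 3)),
    mul_nonneg (mul_nonneg ht ht) (sq_nonneg (t - 3)),
    mul_nonneg (mul_nonneg (mul_nonneg ht ht) ht) (sq_nonneg (t - 3)),
    mul_nonneg (mul_nonneg (mul_nonneg (mul_nonneg ht ht) ht) ht) (sq_nonneg (t - 3)),
    mul_nonneg ht ht]

lemma poly7 (t : ℝ) (ht : 0 ≤ t) :
    t^2 - 2*(0.84:ℝ)*t - (-0.22) ≤ (0.225:ℝ)*(1+t+t^2/2+t^3/6+t^4/24+t^5/120+t^6/720) := by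
  nlinarith [sq_nonneg (t - 31/10), mul_nonneg ht (sq_nonneg (t - 31/10)),
    mul_nonneg (mul_nonneg ht ht) (sq_nonneg (t - 31/10)),
    mul_nonneg (mul_nonneg (mul_nonneg ht ht) ht) (sq_nonneg (t - 31/10)),
    mul_nonneg (mul_nonneg (mul_nonneg (mul_nonneg ht ht) ht) ht) (sq_nonneg (t - 31/10)),
    mul_nonneg ht ht]

lemma log2_lb : (0.6931471:ℝ) ≤ Real.log 2 := by linarith [Real.log_two_gt_d9]

lemma log3_lb : (1.0952:ℝ) ≤ Real.log 3 := by
  have h9 : Real.log 9 = 2 * Real.log 3 := by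
    rw [show (9:ℝ) = 3^2 by norm_num, Real.log_pow]; push_cast; ring
  have h8 : Real.log 8 = 3 * Real.log 2 := by
    rw [show (8:ℝ) = 2^3 by norm_num, Real.log_pow]; push_cast; ring
  have h98 : Real.log 9 = Real.log 8 + Real.log (9/8) := by
    rw [← Real.log_mul (by norm_num) (by norm_num)]; norm_num
  have hl98 : (1/9:ℝ) ≤ Real.log (9/8) := by
    have h := Real.log_le_sub_one_of_pos (show (0:ℝ) < 8/9 by norm_num)
    have heq : Real.log (9/8) = - Real.log (8/9) := by
      rw [← Real.log_inv]; norm_num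
    rw [heq]; linarith
  linarith [log2_lb]

lemma log5_lb : (1.5862:ℝ) ≤ Real.log 5 := by
  have h4 : Real.log 4 = 2 * Real.log 2 := by
    rw [show (4:ℝ) = 2^2 by norm_num, Real.log_pow]; push_cast; ring
  have h54 : Real.log 5 = Real.log 4 + Real.log (5/4) := by
    rw [← Real.log_mul (by norm_num) (by norm_num)]; norm_num
  have hl54 : (1/5:ℝ) ≤ Real.log (5/4) := by
    have h := Real.log_le_sub_one_of_pos (show (0:ℝ) < 4/5 by norm_num)
    have heq : Real.log (5/4) = - Real.log (4/5) := by
      rw [← Real.log_inv]; norm_num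
    rw [heq]; linarith
  linarith [log2_lb]

lemma log6_lb : (1.7883:ℝ) ≤ Real.log 6 := by
  have h6 : Real.log 6 = Real.log 2 + Real.log 3 := by
    rw [← Real.log_mul (by norm_num) (by norm_num)]; norm_num
  linarith [log2_lb, log3_lb]

lemma log7_lb : (1.9365:ℝ) ≤ Real.log 7 := by
  have h8 : Real.log 8 = 3 * Real.log 2 := by
    rw [show (8:ℝ) = 2^3 by norm_num, Real.log_pow]; push_cast; ring
  have h87 : Real.log 8 = Real.log 7 + Real.log (8/7) := by
    rw [← Real.log_mul (by norm_num) (by norm_num)]; norm_num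
  have hl87 : Real.log (8/7) ≤ 1/7 := by
    have h := Real.log_le_sub_one_of_pos (show (0:ℝ) < 8/7 by norm_num)
    linarith
  linarith [log2_lb]

lemma bigkey (E K L : ℝ) (hE1 : (2.7182818:ℝ) ≤ E) (hE2 : E ≤ (2.7182819:ℝ))
    (hK7 : (7:ℝ) ≤ K) (hL : (1.9365:ℝ) ≤ L) (hLE : L*E ≤ K) :
    (K+1)*((4/E^2 + L/E)/K) ≤ (1+L)/2 := by
  have hK0 : (0:ℝ) < K := by linarith
  have hE0 : (0:ℝ) < E := by linarith
  have hL0 : (0:ℝ) ≤ L := by linarith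
  rw [show (K+1)*((4/E^2 + L/E)/K) = ((K+1)*(4/E^2 + L/E))/K by ring, div_le_iff₀ hK0]
  have h2 : (K+1)*(4/E^2 + L/E) = ((K+1)*(4 + L*E))/E^2 := by
    field_simp
  rw [h2, div_le_iff₀ (by positivity)]
  have hEsq : (7.38905:ℝ) ≤ E^2 := by nlinarith
  have step1 : (1+L)/2*K*7.38905 ≤ (1+L)/2*K*E^2 := by
    have hc : (0:ℝ) ≤ (1+L)/2*K := by positivity
    nlinarith [mul_le_mul_of_nonneg_left hEsq hc]
  have hKL : 1.9365*K ≤ K*L := by nlinarith [mul_nonneg hK0.le (sub_nonneg.mpr hL)]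
  have hKLE : K*(L*E) ≤ K*(L*2.7182819) := by
    have h3 : L*E ≤ L*2.7182819 := mul_le_mul_of_nonneg_left hE2 hL0
    exact mul_le_mul_of_nonneg_left h3 hK0.le
  nlinarith [step1, hKL, hKLE, hLE]

theorem stmt_12 (d : ℕ) (hd : 2 ≤ d) (q : Fin d → ℝ)
    (hq0 : ∀ i, 0 ≤ q i) (hq1 : ∑ i, q i = 1) :
    ∑ i, q i * (Real.log (q i)) ^ 2 - (∑ i, q i * Real.log (q i)) ^ 2
      ≤ (1 + Real.log ((d:ℝ) - 1)) / 2 + (Real.log ((d:ℝ) - 1)) ^ 2 / 4 := by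
  rcases le_or_gt 8 d with hbig | hsmall
  · -- d ≥ 8
    set K := (d:ℝ) - 1 with hKdef
    have hd8 : (8:ℝ) ≤ (d:ℝ) := by exact_mod_cast hbig
    have hK7 : (7:ℝ) ≤ K := by rw [hKdef]; linarith
    have hK1 : (1:ℝ) ≤ K := by linarith
    have hK0 : (0:ℝ) < K := by linarith
    have hA := varA d q hq0 hq1 (Real.log K / 2) 0
      ((4/(Real.exp 1)^2 + Real.log K / Real.exp 1)/K) (pointwise_big K hK1)
    refine le_trans hA ?_
    set L := Real.log K with hLdef
    have hL7 : Real.log 7 ≤ L := by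
      rw [hLdef]; exact Real.log_le_log (by norm_num) hK7
    have hL : (1.9365:ℝ) ≤ L := le_trans log7_lb hL7
    have hL0 : (0:ℝ) ≤ L := by linarith
    have hE1 : (2.7182818:ℝ) ≤ Real.exp 1 := by linarith [Real.exp_one_gt_d9]
    have hE2 : Real.exp 1 ≤ (2.7182819:ℝ) := by linarith [Real.exp_one_lt_d9]
    have hE0 : (0:ℝ) < Real.exp 1 := Real.exp_pos 1
    have hLE : L * Real.exp 1 ≤ K := by
      have := log_le_div_e' hK0
      rw [← hLdef] at this; linarith [this]
    have hdK : (d:ℝ) = K + 1 := by rw [hKdef]; ring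
    rw [hdK]
    have key : (K+1)*((4/(Real.exp 1)^2 + L/Real.exp 1)/K) ≤ (1+L)/2 :=
      bigkey (Real.exp 1) K L hE1 hE2 hK7 hL hLE
    nlinarith [key]
  · -- d ≤ 7
    interval_cases d
    · -- d = 2
      have htarget : ((2:ℕ):ℝ) - 1 = 1 := by norm_num
      rw [htarget, Real.log_one]
      norm_num
      have h01 : q 0 + q 1 = 1 := by
        have := hq1; rwa [Fin.sum_univ_two] at this
      have key := two_point (hq0 0) (hq0 1) h01
      have hid : q 0*(Real.log (q 0))^2 + q 1*(Real.log (q 1))^2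
          - (q 0*Real.log (q 0) + q 1*Real.log (q 1))^2
          = q 0*q 1*(Real.log (q 0) - Real.log (q 1))^2 := by
        linear_combination (-(q 0*(Real.log (q 0))^2 + q 1*(Real.log (q 1))^2)) * h01
      linarith [key, hid.le, hid.ge]
    · -- d = 3
      have hA := varA 3 q hq0 hq1 (0.46) (-0.36) (0.365)
        (poly_pointwise _ _ _ (by norm_num) poly3)
      refine le_trans hA ?_
      have h2 : ((3:ℕ):ℝ) - 1 = 2 := by norm_num
      rw [h2]
      have hlog := log2_lb
      push_cast
      nlinarith [hlog, sq_nonneg (Real.log 2 - 0.6931471)]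
    · -- d = 4
      have hA := varA 4 q hq0 hq1 (0.6) (-0.3) (0.305)
        (poly_pointwise _ _ _ (by norm_num) poly4)
      refine le_trans hA ?_
      have h2 : ((4:ℕ):ℝ) - 1 = 3 := by norm_num
      rw [h2]
      have hlog := log3_lb
      push_cast
      nlinarith [hlog, sq_nonneg (Real.log 3 - 1.0952)]
    · -- d = 5
      have hA := varA 5 q hq0 hq1 (0.66) (-0.26) (0.28)
        (poly_pointwise _ _ _ (by norm_num) poly5)
      refine le_trans hA ?_
      have h2 : ((5:ℕ):ℝ) - 1 = 4 := by norm_num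
      rw [h2]
      have h4 : Real.log 4 = 2 * Real.log 2 := by
        rw [show (4:ℝ) = 2^2 by norm_num, Real.log_pow]; push_cast; ring
      have hlog : (1.3862942:ℝ) ≤ Real.log 4 := by rw [h4]; linarith [log2_lb]
      push_cast
      nlinarith [hlog, sq_nonneg (Real.log 4 - 1.3862942)]
    · -- d = 6
      have hA := varA 6 q hq0 hq1 (0.78) (-0.22) (0.24)
        (poly_pointwise _ _ _ (by norm_num) poly6)
      refine le_trans hA ?_
      have h2 : ((6:ℕ):ℝ) - 1 = 5 := by norm_num
      rw [h2]
      have hlog := log5_lb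
      push_cast
      nlinarith [hlog, sq_nonneg (Real.log 5 - 1.5862)]
    · -- d = 7
      have hA := varA 7 q hq0 hq1 (0.84) (-0.22) (0.225)
        (poly_pointwise _ _ _ (by norm_num) poly7)
      refine le_trans hA ?_
      have h2 : ((7:ℕ):ℝ) - 1 = 6 := by norm_num
      rw [h2]
      have hlog := log6_lb
      push_cast
      nlinarith [hlog, sq_nonneg (Real.log 6 - 1.7883)]
end

section
/- For vectors r₁, r₂ ∈ ℝ³ with |r₁| ≤ 1, |r₂| ≤ 1 and α ∈ [0,1], the vector r = α r₁ + (1−α) r₂ + √(α(1−α)) (r₁ × r₂) satisfies |r| ≤ α|r₁| + (1−α)|r₂|. -/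
/-- The Euclidean norm of a vector in `ℝ³`. -/
noncomputable def enorm3 (r : Fin 3 → ℝ) : ℝ := Real.sqrt (∑ i, r i ^ 2)

theorem stmt_18 (α : ℝ) (hα : α ∈ Set.Icc (0:ℝ) 1) (r₁ r₂ : Fin 3 → ℝ)
    (hr₁ : enorm3 r₁ ≤ 1) (hr₂ : enorm3 r₂ ≤ 1) :
    enorm3 (α • r₁ + (1 - α) • r₂ + Real.sqrt (α * (1 - α)) • (crossProduct r₁ r₂))
      ≤ α * enorm3 r₁ + (1 - α) * enorm3 r₂ := by
  obtain ⟨h0, h1⟩ := hα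
  have h1' : (0:ℝ) ≤ 1 - α := by linarith
  set n1 := enorm3 r₁ with hn1
  set n2 := enorm3 r₂ with hn2
  have hn1nn : 0 ≤ n1 := Real.sqrt_nonneg _
  have hn2nn : 0 ≤ n2 := Real.sqrt_nonneg _
  set c := Real.sqrt (α * (1 - α)) with hc
  have hc2 : c ^ 2 = α * (1 - α) := Real.sq_sqrt (mul_nonneg h0 h1')
  have hsq1 : n1 ^ 2 = r₁ 0 ^ 2 + r₁ 1 ^ 2 + r₁ 2 ^ 2 := by
    rw [hn1, enorm3, Real.sq_sqrt (by positivity), Fin.sum_univ_three]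
  have hsq2 : n2 ^ 2 = r₂ 0 ^ 2 + r₂ 1 ^ 2 + r₂ 2 ^ 2 := by
    rw [hn2, enorm3, Real.sq_sqrt (by positivity), Fin.sum_univ_three]
  have ht2 : (r₁ 0 * r₂ 0 + r₁ 1 * r₂ 1 + r₁ 2 * r₂ 2) ^ 2 ≤ n1 ^ 2 * n2 ^ 2 := by
    rw [hsq1, hsq2]
    nlinarith [sq_nonneg (r₁ 1 * r₂ 2 - r₁ 2 * r₂ 1), sq_nonneg (r₁ 2 * r₂ 0 - r₁ 0 * r₂ 2),
      sq_nonneg (r₁ 0 * r₂ 1 - r₁ 1 * r₂ 0)]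
  have hta : r₁ 0 * r₂ 0 + r₁ 1 * r₂ 1 + r₁ 2 * r₂ 2 ≤ n1 * n2 := by
    nlinarith [mul_nonneg hn1nn hn2nn, ht2,
      sq_nonneg (r₁ 0 * r₂ 0 + r₁ 1 * r₂ 1 + r₁ 2 * r₂ 2 - n1 * n2),
      sq_nonneg (r₁ 0 * r₂ 0 + r₁ 1 * r₂ 1 + r₁ 2 * r₂ 2 + n1 * n2)]
  have ha1 : n1 * n2 ≤ 1 := by nlinarith
  have hfin : 0 ≤ α * (1 - α) * ((n1 * n2 - (r₁ 0 * r₂ 0 + r₁ 1 * r₂ 1 + r₁ 2 * r₂ 2))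
      * (2 - n1 * n2 - (r₁ 0 * r₂ 0 + r₁ 1 * r₂ 1 + r₁ 2 * r₂ 2))) :=
    mul_nonneg (mul_nonneg h0 h1') (mul_nonneg (by linarith) (by linarith))
  have hRHS : 0 ≤ α * n1 + (1 - α) * n2 :=
    add_nonneg (mul_nonneg h0 hn1nn) (mul_nonneg h1' hn2nn)
  have key : (∑ i, (α • r₁ + (1 - α) • r₂ + c • (crossProduct r₁ r₂)) i ^ 2)
      ≤ (α * n1 + (1 - α) * n2) ^ 2 := by
    have expand : (∑ i, (α • r₁ + (1 - α) • r₂ + c • (crossProduct r₁ r₂)) i ^ 2)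
        = α ^ 2 * (r₁ 0 ^ 2 + r₁ 1 ^ 2 + r₁ 2 ^ 2)
          + (1 - α) ^ 2 * (r₂ 0 ^ 2 + r₂ 1 ^ 2 + r₂ 2 ^ 2)
          + 2 * α * (1 - α) * (r₁ 0 * r₂ 0 + r₁ 1 * r₂ 1 + r₁ 2 * r₂ 2)
          + c ^ 2 * ((r₁ 0 ^ 2 + r₁ 1 ^ 2 + r₁ 2 ^ 2) * (r₂ 0 ^ 2 + r₂ 1 ^ 2 + r₂ 2 ^ 2)
            - (r₁ 0 * r₂ 0 + r₁ 1 * r₂ 1 + r₁ 2 * r₂ 2) ^ 2) := by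
      simp only [Fin.sum_univ_three, Pi.add_apply, Pi.smul_apply, smul_eq_mul, cross_apply,
        Matrix.cons_val_zero, Matrix.cons_val_one, Matrix.head_cons, Matrix.cons_val_two,
        Matrix.tail_cons]
      ring
    rw [expand, hc2, ← hsq1, ← hsq2]
    have hid : (α * n1 + (1 - α) * n2) ^ 2
        - (α ^ 2 * n1 ^ 2 + (1 - α) ^ 2 * n2 ^ 2
          + 2 * α * (1 - α) * (r₁ 0 * r₂ 0 + r₁ 1 * r₂ 1 + r₁ 2 * r₂ 2)
          + α * (1 - α) * (n1 ^ 2 * n2 ^ 2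
            - (r₁ 0 * r₂ 0 + r₁ 1 * r₂ 1 + r₁ 2 * r₂ 2) ^ 2))
        = α * (1 - α) * ((n1 * n2 - (r₁ 0 * r₂ 0 + r₁ 1 * r₂ 1 + r₁ 2 * r₂ 2))
          * (2 - n1 * n2 - (r₁ 0 * r₂ 0 + r₁ 1 * r₂ 1 + r₁ 2 * r₂ 2))) := by ring
    linarith [hfin, hid]
  calc enorm3 (α • r₁ + (1 - α) • r₂ + c • (crossProduct r₁ r₂))
      ≤ Real.sqrt ((α * n1 + (1 - α) * n2) ^ 2) := Real.sqrt_le_sqrt key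
    _ = α * n1 + (1 - α) * n2 := Real.sqrt_sq hRHS
end
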